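/- Consider the path network with node set {s, u, v, t}, arcs (s,u), (u,v), (v,t) each with resistance β = 1, and potential interval [0, 4]. There exists a feasible 3-stage gas s-t-flow of value 2 − √2 in which the potentials of s and t equal 2 in all three stages. Concretely, the stage potentials (π^i_s, π^i_u, π^i_v, π^i_t) given by (2,1,0,2), (2,1,3,2), (2,4,3,2) induce stationary gas flows whose stage-wise node balances sum to b with b_s = 2 − √2 = −b_t and b_u = b_v = 0. -/

import Mathlib

open Finset

/-- The stationary gas flow induced by node potentials `π` and resistances `β`
(Weymouth's equation). -/
noncomputable def inducedFlow {V : Type*} (β : V × V → ℝ) (π : V → ℝ) (a : V × V) : ℝ :=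
  Real.sign (π a.1 - π a.2) * Real.sqrt (|π a.1 - π a.2| / β a)

/-- The node balance (outflow minus inflow) at node `v` of the stationary gas flow
induced by `π`. -/
noncomputable def balance {V : Type*} [DecidableEq V] (A : Finset (V × V))
    (β : V × V → ℝ) (π : V → ℝ) (v : V) : ℝ :=
  (∑ a ∈ A.filter (fun a => a.1 = v), inducedFlow β π a) -
    (∑ a ∈ A.filter (fun a => a.2 = v), inducedFlow β π a)

/-- The arcs of the path network `s = 0 → u = 1 → v = 2 → t = 3` of Example 1. -/
def pathArcs : Finset (Fin 4 × Fin 4) := {(0, 1), (1, 2), (2, 3)}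

/-- The three stage potentials of Example 1 (Fig. 1 of the paper). -/
noncomputable def examplePotentials : Fin 3 → Fin 4 → ℝ :=
  ![![2, 1, 0, 2], ![2, 1, 3, 2], ![2, 4, 3, 2]]

/-!
Each arc of the path has potential drop `1` in two stages and drop `-2` in the third, so
with unit resistances the three stage flows on every arc add up to `1 + 1 - √2`. A flow that is
constant along a path leaves its source with that value, enters its sink with it, and is
conserved in between. -/

def netOutflow {V : Type*} [DecidableEq V] (A : Finset (V × V)) (x : V × V → ℝ) (v : V) : ℝ :=
  (∑ a ∈ A.filter (fun a => a.1 = v), x a) - (∑ a ∈ A.filter (fun a => a.2 = v), x a)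

section NetOutflow

variable {V : Type*} [DecidableEq V] (A : Finset (V × V))

theorem balance_eq_netOutflow (β : V × V → ℝ) (π : V → ℝ) (v : V) :
    balance A β π v = netOutflow A (inducedFlow β π) v :=
  rfl

theorem sum_netOutflow {ι : Type*} (s : Finset ι) (x : ι → V × V → ℝ) (v : V) :
    ∑ i ∈ s, netOutflow A (x i) v = netOutflow A (fun a => ∑ i ∈ s, x i a) v := by
  simp only [netOutflow, sum_sub_distrib]
  rw [sum_comm, sum_comm (s := s)]

variable {A} in
theorem netOutflow_congr {x y : V × V → ℝ} (h : ∀ a ∈ A, x a = y a) (v : V) :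
    netOutflow A x v = netOutflow A y v := by
  unfold netOutflow
  rw [sum_congr rfl fun a ha => h a (mem_filter.1 ha).1,
    sum_congr rfl fun a ha => h a (mem_filter.1 ha).1]

end NetOutflow

theorem netOutflow_pathArcs_const (q : ℝ) (v : Fin 4) :
    netOutflow pathArcs (fun _ => q) v = if v = 0 then q else if v = 3 then -q else 0 := by
  fin_cases v <;> simp [netOutflow, pathArcs, filter_insert, filter_singleton]

theorem sum_inducedFlow_examplePotentials {a : Fin 4 × Fin 4} (ha : a ∈ pathArcs) :
    ∑ i, inducedFlow (fun _ => 1) (examplePotentials i) a = 2 - Real.sqrt 2 := by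
  simp only [pathArcs, mem_insert, mem_singleton] at ha
  rcases ha with rfl | rfl | rfl <;>
  · simp only [Fin.sum_univ_three, inducedFlow, examplePotentials, Matrix.cons_val]
    norm_num [Real.sign_of_neg]
    ring

/-- Example 1 of the paper: on the path network with unit resistances and potential
interval `[0,4]`, the given stage potentials form a feasible 3-stage gas s-t-flow of
value `2 - √2` in which the potentials of `s` and `t` equal `2` in all three stages. -/
theorem pump_example :
    (∀ (i : Fin 3) (v : Fin 4), 0 ≤ examplePotentials i v ∧ examplePotentials i v ≤ 4) ∧
      (∀ i : Fin 3, examplePotentials i 0 = 2 ∧ examplePotentials i 3 = 2) ∧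
      (∀ v : Fin 4,
        ∑ i : Fin 3, balance pathArcs (fun _ => 1) (examplePotentials i) v =
          if v = 0 then 2 - Real.sqrt 2
          else if v = 3 then -(2 - Real.sqrt 2) else 0) := by
  refine ⟨fun i v => ?_, fun i => ?_, fun v => ?_⟩
  · fin_cases i <;> fin_cases v <;> norm_num [examplePotentials]
  · fin_cases i <;> simp [examplePotentials]
  · simp only [balance_eq_netOutflow, sum_netOutflow]
    rw [netOutflow_congr (fun a ha => sum_inducedFlow_examplePotentials ha),
      netOutflow_pathArcs_const]
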